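/- Let G be a finite simple block graph and let P_1,…,P_ℓ be vertex-disjoint induced paths of G. The following are equivalent: (1) P_ind does not contain an internal strand, an internal fork, a double fork, or a complete ladder as a subgraph; (2) P_ind does not contain a complete ladder, nor an internal strand, internal fork, or double fork that is edge-disjoint from P̲ = P_1 ∪ … ∪ P_ℓ. -/

import Mathlib

open SimpleGraph

/-- An induced path in a simple graph `G`: a walk which is a path and such that the
subgraph of `G` induced on its vertex set equals the path. -/
structure InducedPath {V : Type*} (G : SimpleGraph V) where
  first : V
  last : V
  walk : G.Walk first last
  isPath : walk.IsPath
  induced : ∀ x ∈ walk.support, ∀ y ∈ walk.support, G.Adj x y → s(x, y) ∈ walk.edges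

namespace InducedPath

variable {V : Type*} {G : SimpleGraph V}

/-- The vertex set of an induced path. -/
def vertexSet (P : InducedPath G) : Set V := {v | v ∈ P.walk.support}

/-- The edge set of an induced path. -/
def edgeSet (P : InducedPath G) : Set (Sym2 V) := {e | e ∈ P.walk.edges}

/-- The terminal vertices `∂P` of an induced path. -/
def boundary (P : InducedPath G) : Set V := {P.first, P.last}

/-- The internal vertices `P°` of an induced path. -/
def interior (P : InducedPath G) : Set V := P.vertexSet \ P.boundary

end InducedPath

section FamilyDefs

variable {V : Type*} (G : SimpleGraph V) {ℓ : ℕ}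

/-- `Q` contains `P` as a subgraph. -/
def PathContains (Q P : InducedPath G) : Prop :=
  P.vertexSet ⊆ Q.vertexSet ∧ P.edgeSet ⊆ Q.edgeSet

/-- The vertex set of `P_ind`, the induced subgraph on `⋃ i, V(P i)`. -/
def famVerts (P : Fin ℓ → InducedPath G) : Set V := ⋃ i, (P i).vertexSet

/-- The union of the edge sets of the paths `P i`. -/
def famEdges (P : Fin ℓ → InducedPath G) : Set (Sym2 V) := ⋃ i, (P i).edgeSet

/-- The paths `P i` are pairwise vertex-disjoint. -/
def PairwiseVertexDisjoint (P : Fin ℓ → InducedPath G) : Prop :=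
  ∀ i j : Fin ℓ, i ≠ j → Disjoint (P i).vertexSet (P j).vertexSet

/-- `φ` is an orientation of the induced path `P`, i.e. a surjection `{1,2} → ∂P`. -/
def IsOrientation (P : InducedPath G) (φ : Fin 2 → V) : Prop :=
  Set.range φ = P.boundary

/-- `Q` is an induced path of `P_ind` (equivalently, an induced path of `G` all of whose
vertices belong to `⋃ i, V(P i)`). -/
def IsPathOfInd (P : Fin ℓ → InducedPath G) (Q : InducedPath G) : Prop :=
  Q.vertexSet ⊆ famVerts G P

/-- The data `(P, σ, φ)` is DOIP. -/
def IsDOIPData (P : Fin ℓ → InducedPath G) (σ : Equiv.Perm (Fin ℓ))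
    (φ : Fin ℓ → Fin 2 → V) : Prop :=
  (∀ i, IsOrientation G (P i) (φ i)) ∧
    ∀ i j : Fin ℓ, σ i ≤ σ j → ∀ Q : InducedPath G, IsPathOfInd G P Q →
      ({Q.first, Q.last} : Set V) = {φ (σ i) 0, φ (σ j) 1} →
      ∃ k, PathContains G Q (P k)

/-- The family `P` is DOIP: there exist `σ` and orientations making it DOIP. -/
def FamilyDOIP (P : Fin ℓ → InducedPath G) : Prop :=
  ∃ (σ : Equiv.Perm (Fin ℓ)) (φ : Fin ℓ → Fin 2 → V), IsDOIPData G P σ φ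

/-- `Q` realizes an arc `(i,j)` of the directed multigraph `K_{P_ind}`. -/
def KArcWitness (P : Fin ℓ → InducedPath G) (φ : Fin ℓ → Fin 2 → V) (i j : Fin ℓ)
    (Q : InducedPath G) : Prop :=
  IsPathOfInd G P Q ∧ ({Q.first, Q.last} : Set V) = {φ i 0, φ j 1} ∧
    ∀ k, ¬ PathContains G Q (P k)

/-- `(i,j)` is an arc of `K_{P_ind}`. -/
def KArc (P : Fin ℓ → InducedPath G) (φ : Fin ℓ → Fin 2 → V) (i j : Fin ℓ) : Prop :=
  ∃ Q : InducedPath G, KArcWitness G P φ i j Q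

/-- The directed multigraph `K_{P_ind}` is directed acyclic (no loops and no directed
cycles). -/
def KAcyclic (P : Fin ℓ → InducedPath G) (φ : Fin ℓ → Fin 2 → V) : Prop :=
  ∀ i : Fin ℓ, ¬ Relation.TransGen (KArc G P φ) i i

/-- `Q` is a strand of `P_ind` from `P i` to `P j`. -/
def IsStrand (P : Fin ℓ → InducedPath G) (φ : Fin ℓ → Fin 2 → V) (i j : Fin ℓ)
    (Q : InducedPath G) : Prop :=
  i ≠ j ∧ IsPathOfInd G P Q ∧ Q.first ≠ φ i 1 ∧ Q.last ≠ φ j 0 ∧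
    Q.vertexSet ∩ (P i).vertexSet = {Q.first} ∧
    Q.vertexSet ∩ (P j).vertexSet = {Q.last} ∧
    ∀ k, ¬ PathContains G Q (P k)

/-- `Q` is an internal strand of `P_ind` from `P i` to `P j`. -/
def IsInternalStrand (P : Fin ℓ → InducedPath G) (i j : Fin ℓ) (Q : InducedPath G) : Prop :=
  i ≠ j ∧ IsPathOfInd G P Q ∧
    Q.first ∈ (P i).interior ∧ Q.last ∈ (P j).interior ∧
    Q.vertexSet ∩ (P i).vertexSet = {Q.first} ∧
    Q.vertexSet ∩ (P j).vertexSet = {Q.last} ∧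
    ∀ k, ¬ PathContains G Q (P k)

/-- `(Q, b, c)` is an internal fork of `P_ind` from `P i` to `P j`. -/
def IsInternalFork (P : Fin ℓ → InducedPath G) (i j : Fin ℓ) (Q : InducedPath G)
    (b c : V) : Prop :=
  i ≠ j ∧ IsPathOfInd G P Q ∧ Q.first ∈ (P i).interior ∧
    Q.vertexSet ∩ (P i).vertexSet = {Q.first} ∧
    Q.vertexSet ∩ (P j).vertexSet = ∅ ∧
    b ∈ (P j).vertexSet ∧ c ∈ (P j).vertexSet ∧ b ≠ c ∧
    G.Adj Q.last b ∧ G.Adj Q.last c ∧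
    ∀ k, ¬ PathContains G Q (P k)

/-- `(Q, a, b, c, d)` is a double fork of `P_ind` from `P i` to `P j`. -/
def IsDoubleFork (P : Fin ℓ → InducedPath G) (i j : Fin ℓ) (Q : InducedPath G)
    (a b c d : V) : Prop :=
  i ≠ j ∧ IsPathOfInd G P Q ∧
    Q.vertexSet ∩ (P i).vertexSet = ∅ ∧
    Q.vertexSet ∩ (P j).vertexSet = ∅ ∧
    a ∈ (P i).vertexSet ∧ b ∈ (P i).vertexSet ∧ a ≠ b ∧
    c ∈ (P j).vertexSet ∧ d ∈ (P j).vertexSet ∧ c ≠ d ∧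
    G.Adj Q.first a ∧ G.Adj Q.first b ∧ G.Adj Q.last c ∧ G.Adj Q.last d ∧
    ∀ k, ¬ PathContains G Q (P k)

/-- `(a, b, c, d)` is a complete ladder of `P_ind` between `P i` and `P j`. -/
def IsCompleteLadder (P : Fin ℓ → InducedPath G) (i j : Fin ℓ) (a b c d : V) : Prop :=
  i ≠ j ∧ a ∈ (P i).vertexSet ∧ b ∈ (P i).vertexSet ∧ a ≠ b ∧
    c ∈ (P j).vertexSet ∧ d ∈ (P j).vertexSet ∧ c ≠ d ∧
    G.Adj a b ∧ G.Adj a c ∧ G.Adj a d ∧ G.Adj b c ∧ G.Adj b d ∧ G.Adj c d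

/-- `P_ind` contains an internal strand, an internal fork, a double fork, or a
complete ladder. -/
def HasForbidden (P : Fin ℓ → InducedPath G) : Prop :=
  (∃ i j Q, IsInternalStrand G P i j Q) ∨
  (∃ i j Q b c, IsInternalFork G P i j Q b c) ∨
  (∃ i j Q a b c d, IsDoubleFork G P i j Q a b c d) ∨
  (∃ i j a b c d, IsCompleteLadder G P i j a b c d)

/-- `P_ind` contains a complete ladder, or an internal strand, internal fork, or double
fork which is edge-disjoint from the family `P`. -/
def HasForbiddenEdgeDisjoint (P : Fin ℓ → InducedPath G) : Prop :=
  (∃ i j Q, IsInternalStrand G P i j Q ∧ Disjoint Q.edgeSet (famEdges G P)) ∨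
  (∃ i j Q b c, IsInternalFork G P i j Q b c ∧
    Disjoint (Q.edgeSet ∪ {s(Q.last, b), s(Q.last, c)}) (famEdges G P)) ∨
  (∃ i j Q a b c d, IsDoubleFork G P i j Q a b c d ∧
    Disjoint (Q.edgeSet ∪ {s(Q.first, a), s(Q.first, b), s(Q.last, c), s(Q.last, d)})
      (famEdges G P)) ∨
  (∃ i j a b c d, IsCompleteLadder G P i j a b c d)

end FamilyDefs

section Invariants

variable {V : Type*}

/-- The invariant `ν(G)`: the maximal total number of edges of a family of
vertex-disjoint induced paths of `G` which is DOIP. -/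
noncomputable def nu (G : SimpleGraph V) : ℕ :=
  sSup {n : ℕ | ∃ (ℓ : ℕ) (P : Fin ℓ → InducedPath G),
    PairwiseVertexDisjoint G P ∧ FamilyDOIP G P ∧ n = ∑ i, (P i).walk.length}

/-- `ℓ(G)`: the number of edges of a longest induced path of `G`. -/
noncomputable def longestInducedPathLength (G : SimpleGraph V) : ℕ :=
  sSup {n : ℕ | ∃ P : InducedPath G, n = P.walk.length}

end Invariants

section BlockGraphs

variable {V : Type*} {G : SimpleGraph V}

/-- A subgraph is biconnected if it is connected and remains connected after
deleting any single vertex. -/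
def SubgraphBiconnected (H : G.Subgraph) : Prop :=
  H.coe.Connected ∧ ∀ v : V, ((H.deleteVerts {v}).coe).Connected

/-- A block of `G` is a maximal biconnected subgraph. -/
def IsBlock (H : G.Subgraph) : Prop :=
  SubgraphBiconnected H ∧ ∀ H' : G.Subgraph, SubgraphBiconnected H' → H ≤ H' → H' = H

/-- `G` is a block graph if every block of `G` is a complete graph. -/
def IsBlockGraph (G : SimpleGraph V) : Prop :=
  ∀ H : G.Subgraph, IsBlock H → ∀ a ∈ H.verts, ∀ b ∈ H.verts, a ≠ b → H.Adj a b

/-- The intersection `Q ∩ R` of two induced paths, as a subgraph of `G`. -/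
def pathsInter (Q R : InducedPath G) : G.Subgraph where
  verts := Q.vertexSet ∩ R.vertexSet
  Adj a b := G.Adj a b ∧ s(a, b) ∈ Q.walk.edges ∧ s(a, b) ∈ R.walk.edges
  adj_sub h := h.1
  edge_vert h := ⟨Q.walk.fst_mem_support_of_mem_edges h.2.1,
    R.walk.fst_mem_support_of_mem_edges h.2.2⟩
  symm := by
    constructor
    intro a b h
    refine ⟨h.1.symm, ?_, ?_⟩
    · rw [Sym2.eq_swap]; exact h.2.1
    · rw [Sym2.eq_swap]; exact h.2.2

/-- `s` is a maximal clique of `G`. -/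
def IsMaxClique (G : SimpleGraph V) (s : Set V) : Prop :=
  G.IsClique s ∧ ∀ t : Set V, G.IsClique t → s ⊆ t → s = t

/-- `G` has the two-block property: every vertex belongs to at most two maximal
cliques. -/
def TwoBlockProperty (G : SimpleGraph V) : Prop :=
  ∀ v : V, ({s : Set V | IsMaxClique G s ∧ v ∈ s}).ncard ≤ 2

/-- The completion `G_c` of `G` at the vertex `c`. -/
def completionAt (G : SimpleGraph V) (c : V) : SimpleGraph V where
  Adj u w := G.Adj u w ∨ (u ≠ w ∧ G.Adj c u ∧ G.Adj c w)
  symm := by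
    constructor
    intro u w h
    rcases h with h | ⟨hne, h1, h2⟩
    · exact Or.inl h.symm
    · exact Or.inr ⟨hne.symm, h2, h1⟩
  loopless := by
    constructor
    intro u h
    rcases h with h | ⟨hne, _, _⟩
    · exact G.irrefl h
    · exact hne rfl

/-- The number of connected components of a graph. -/
noncomputable def numComponents (G : SimpleGraph V) : ℕ :=
  Nat.card G.ConnectedComponent

/-- `c` is a cut vertex of `G`: deleting it strictly increases the number of
connected components. -/
def IsCutVertex (G : SimpleGraph V) (c : V) : Prop :=
  numComponents G < numComponents (G.induce ({c}ᶜ : Set V))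

end BlockGraphs

/-!
In a block graph, two internally disjoint paths between distinct vertices `x` and `z` span a
biconnected subgraph, which lies in a block, i.e. a clique; hence `x` and `z` are adjacent. It
follows that an induced path is determined by its ends, so an induced path meeting both ends of
some `P k` contains `P k`.

Now let an internal strand, internal fork or double fork `Q` share an edge with `P k`. As `Q`
does not contain `P k`, the first or the last vertex of `P k` met along `Q` is internal to `P k`,
and cutting `Q` there gives a shorter forbidden configuration: an internal strand from an
internal strand, an internal strand or an internal fork from an internal fork, and an internal
fork from a double fork. Induction on the length of `Q` ends in an edge-disjoint one.
-/

namespace SimpleGraph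

variable {V : Type*} {G : SimpleGraph V}

namespace Subgraph

lemma deleteVerts_sup (H K : G.Subgraph) (s : Set V) :
    (H ⊔ K).deleteVerts s = H.deleteVerts s ⊔ K.deleteVerts s := by
  ext u w
  · simp [or_and_right]
  · simp only [deleteVerts_adj, sup_adj, verts_sup, Set.mem_union]
    constructor
    · rintro ⟨-, hu, -, hw, h | h⟩
      exacts [Or.inl ⟨H.edge_vert h, hu, H.edge_vert h.symm, hw, h⟩,
        Or.inr ⟨K.edge_vert h, hu, K.edge_vert h.symm, hw, h⟩]
    · rintro (⟨hu, hus, hw, hws, h⟩ | ⟨hu, hus, hw, hws, h⟩)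
      exacts [⟨Or.inl hu, hus, Or.inl hw, hws, Or.inl h⟩,
        ⟨Or.inr hu, hus, Or.inr hw, hws, Or.inr h⟩]

lemma deleteVerts_eq_self {H : G.Subgraph} {s : Set V} (h : Disjoint H.verts s) :
    H.deleteVerts s = H := by
  have hs {x : V} (hx : x ∈ H.verts) : x ∉ s := Set.disjoint_left.mp h hx
  ext u w
  · simpa using fun hu => hs hu
  · rw [deleteVerts_adj]
    exact ⟨fun huw => huw.2.2.2.2, fun huw => ⟨H.edge_vert huw, hs (H.edge_vert huw),
      H.edge_vert huw.symm, hs (H.edge_vert huw.symm), huw⟩⟩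

end Subgraph

namespace Walk

variable {u v w : V}

lemma connected_toSubgraph_sup (p q : G.Walk u v) : (p.toSubgraph ⊔ q.toSubgraph).Connected :=
  Subgraph.connected_sup p.toSubgraph_connected.preconnected q.toSubgraph_connected.preconnected
    ⟨u, p.start_mem_verts_toSubgraph, q.start_mem_verts_toSubgraph⟩

lemma IsPath.connected_toSubgraph_deleteVerts_start {p : G.Walk u v} (hp : p.IsPath)
    (huv : u ≠ v) : (p.toSubgraph.deleteVerts {u}).Connected := by
  cases p with
  | nil => exact absurd rfl huv
  | cons h q =>
    have hu : u ∉ q.support := ((cons_isPath_iff h q).mp hp).2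
    have hq : q.toSubgraph.deleteVerts {u} = q.toSubgraph :=
      Subgraph.deleteVerts_eq_self (by simpa using hu)
    refine q.toSubgraph_connected.mono ?_ ?_
    · rw [Walk.toSubgraph, Subgraph.deleteVerts_sup, hq]
      exact le_sup_right
    · ext w
      simp only [verts_toSubgraph, support_cons, Subgraph.deleteVerts_verts, Set.mem_sdiff,
        Set.mem_ofPred_eq, List.mem_cons, Set.mem_singleton_iff]
      exact ⟨fun hw => ⟨Or.inr hw, by rintro rfl; exact hu hw⟩,
        fun hw => hw.1.resolve_left hw.2⟩

lemma IsPath.connected_toSubgraph_deleteVerts_end {p : G.Walk u v} (hp : p.IsPath)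
    (huv : u ≠ v) : (p.toSubgraph.deleteVerts {v}).Connected := by
  simpa using hp.reverse.connected_toSubgraph_deleteVerts_start huv.symm

lemma IsPath.connected_toSubgraph_sup_deleteVerts_of_notMem {p : G.Walk u v} (hp : p.IsPath)
    (q : G.Walk u v) (hwp : w ∈ p.support) (hwq : w ∉ q.support) :
    ((p.toSubgraph ⊔ q.toSubgraph).deleteVerts {w}).Connected := by
  classical
  have huw : u ≠ w := by rintro rfl; exact hwq q.start_mem_support
  have hvw : v ≠ w := by rintro rfl; exact hwq q.end_mem_support
  have hq : q.toSubgraph.deleteVerts {w} = q.toSubgraph :=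
    Subgraph.deleteVerts_eq_self (by simpa using hwq)
  rw [Subgraph.deleteVerts_sup, hq, ← p.take_spec hwp, toSubgraph_append,
    Subgraph.deleteVerts_sup, sup_assoc]
  have htake := (hp.takeUntil hwp).connected_toSubgraph_deleteVerts_end huw
  have hdrop := (hp.dropUntil hwp).connected_toSubgraph_deleteVerts_start hvw.symm
  exact Subgraph.connected_sup htake.preconnected
    (Subgraph.connected_sup hdrop.preconnected q.toSubgraph_connected.preconnected
      ⟨v, ⟨end_mem_verts_toSubgraph _, hvw⟩, q.end_mem_verts_toSubgraph⟩).preconnected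
    ⟨u, ⟨start_mem_verts_toSubgraph _, huw⟩, Or.inr q.start_mem_verts_toSubgraph⟩

lemma length_takeUntil_lt_length_of_mem_edges_dropUntil [DecidableEq V] (p : G.Walk u v)
    (h : w ∈ p.support) {e : Sym2 V} (he : e ∈ (p.dropUntil w h).edges) :
    (p.takeUntil w h).length < p.length := by
  have hlen := congrArg Walk.length (p.take_spec h)
  rw [Walk.length_append] at hlen
  have := List.length_pos_of_mem he
  rw [Walk.length_edges] at this
  omega

lemma IsChordless.reverse {p : G.Walk u v} (hp : p.IsChordless) : p.reverse.IsChordless := by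
  rw [isChordless_iff_forall_mem_edges] at hp ⊢
  simpa using hp

lemma IsChordless.of_append_left {p : G.Walk u v} {q : G.Walk v w} (hpq : (p.append q).IsPath)
    (h : (p.append q).IsChordless) : p.IsChordless := by
  have hpq' (y : V) (hyp : y ∈ p.support) (hyq : y ∈ q.support) : y = v :=
    by_contra fun hyv => hpq.ne_of_mem_support_of_append hyv hyp hyq rfl
  refine isChordless_iff_forall_mem_edges.mpr fun a b ha hb hab => ?_
  rcases List.mem_append.mp (edges_append p q ▸ h.mem_edges (by simp [ha]) (by simp [hb]) hab)
    with he | he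
  · exact he
  · exact absurd ((hpq' a ha (q.fst_mem_support_of_mem_edges he)).trans
      (hpq' b hb (q.snd_mem_support_of_mem_edges he)).symm) hab.ne

lemma IsChordless.of_append_right {p : G.Walk u v} {q : G.Walk v w} (hpq : (p.append q).IsPath)
    (h : (p.append q).IsChordless) : q.IsChordless := by
  rw [← reverse_reverse q]
  refine IsChordless.reverse (IsChordless.of_append_left (q := p.reverse) ?_ ?_)
  · simpa [← reverse_append] using hpq.reverse
  · simpa [← reverse_append] using h.reverse

lemma IsChordless.of_cons {h : G.Adj u v} {p : G.Walk v w} (hp : (cons h p).IsPath)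
    (hc : (cons h p).IsChordless) : p.IsChordless :=
  hc.of_append_right (p := cons h nil) hp

lemma IsChordless.takeUntil [DecidableEq V] {p : G.Walk u v} (hp : p.IsPath)
    (h : p.IsChordless) (hw : w ∈ p.support) : (p.takeUntil w hw).IsChordless := by
  rw [← p.take_spec hw] at hp h
  exact h.of_append_left hp

lemma IsChordless.dropUntil [DecidableEq V] {p : G.Walk u v} (hp : p.IsPath)
    (h : p.IsChordless) (hw : w ∈ p.support) : (p.dropUntil w hw).IsChordless := by
  rw [← p.take_spec hw] at hp h
  exact h.of_append_right hp

end Walk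

end SimpleGraph

theorem subgraphBiconnected_toSubgraph_sup {V : Type*} {G : SimpleGraph V} {x z : V}
    {A B : G.Walk x z} (hA : A.IsPath) (hB : B.IsPath) (hxz : x ≠ z)
    (hAB : ∀ y ∈ A.support, y ∈ B.support → y = x ∨ y = z) :
    SubgraphBiconnected (A.toSubgraph ⊔ B.toSubgraph) := by
  refine ⟨(Walk.connected_toSubgraph_sup A B).coe, fun v => Subgraph.Connected.coe ?_⟩
  by_cases hvA : v ∈ A.support <;> by_cases hvB : v ∈ B.support
  · rw [Subgraph.deleteVerts_sup]
    rcases hAB v hvA hvB with rfl | rfl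
    · exact Subgraph.connected_sup
        (hA.connected_toSubgraph_deleteVerts_start hxz).preconnected
        (hB.connected_toSubgraph_deleteVerts_start hxz).preconnected
        ⟨z, ⟨A.end_mem_verts_toSubgraph, hxz.symm⟩, B.end_mem_verts_toSubgraph, hxz.symm⟩
    · exact Subgraph.connected_sup
        (hA.connected_toSubgraph_deleteVerts_end hxz).preconnected
        (hB.connected_toSubgraph_deleteVerts_end hxz).preconnected
        ⟨x, ⟨A.start_mem_verts_toSubgraph, hxz⟩, B.start_mem_verts_toSubgraph, hxz⟩
  · exact hA.connected_toSubgraph_sup_deleteVerts_of_notMem B hvA hvB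
  · rw [sup_comm]
    exact hB.connected_toSubgraph_sup_deleteVerts_of_notMem A hvB hvA
  · rw [Subgraph.deleteVerts_eq_self (by simp [hvA, hvB])]
    exact Walk.connected_toSubgraph_sup A B

namespace InducedPath

variable {V : Type*} {G : SimpleGraph V}

lemma isChordless (P : InducedPath G) : P.walk.IsChordless :=
  Walk.isChordless_iff_forall_mem_edges.mpr fun _ _ hx hy => P.induced _ hx _ hy

lemma first_mem_vertexSet (P : InducedPath G) : P.first ∈ P.vertexSet := P.walk.start_mem_support

lemma last_mem_vertexSet (P : InducedPath G) : P.last ∈ P.vertexSet := P.walk.end_mem_support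

lemma nontrivial_inter_vertexSet_of_mem_edgeSet {P Q : InducedPath G} {e : Sym2 V}
    (hP : e ∈ P.edgeSet) (hQ : e ∈ Q.edgeSet) : (P.vertexSet ∩ Q.vertexSet).Nontrivial := by
  induction e using Sym2.ind with
  | _ a b =>
    exact ⟨a, ⟨P.walk.fst_mem_support_of_mem_edges hP,
      Q.walk.fst_mem_support_of_mem_edges hQ⟩, b, ⟨P.walk.snd_mem_support_of_mem_edges hP,
      Q.walk.snd_mem_support_of_mem_edges hQ⟩, (P.walk.adj_of_mem_edges hP).ne⟩

def reverse (P : InducedPath G) : InducedPath G where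
  first := P.last
  last := P.first
  walk := P.walk.reverse
  isPath := P.isPath.reverse
  induced _ hx _ hy := P.isChordless.reverse.mem_edges hx hy

@[simp] lemma reverse_first (P : InducedPath G) : P.reverse.first = P.last := rfl

@[simp] lemma reverse_length (P : InducedPath G) : P.reverse.walk.length = P.walk.length :=
  P.walk.length_reverse

@[simp] lemma reverse_vertexSet (P : InducedPath G) : P.reverse.vertexSet = P.vertexSet := by
  ext; simp [vertexSet, reverse]

@[simp] lemma reverse_edgeSet (P : InducedPath G) : P.reverse.edgeSet = P.edgeSet := by
  ext; simp [edgeSet, reverse]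

section Decomp

variable [DecidableEq V]

def takeUntil (P : InducedPath G) {u : V} (h : u ∈ P.walk.support) : InducedPath G where
  first := P.first
  last := u
  walk := P.walk.takeUntil u h
  isPath := P.isPath.takeUntil h
  induced _ hx _ hy := (P.isChordless.takeUntil P.isPath h).mem_edges hx hy

def dropUntil (P : InducedPath G) {u : V} (h : u ∈ P.walk.support) : InducedPath G where
  first := u
  last := P.last
  walk := P.walk.dropUntil u h
  isPath := P.isPath.dropUntil h
  induced _ hx _ hy := (P.isChordless.dropUntil P.isPath h).mem_edges hx hy

end Decomp

end InducedPath

section PathContains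

variable {V : Type*} {G : SimpleGraph V}

lemma PathContains.trans {P Q R : InducedPath G} (hPQ : PathContains G P Q)
    (hQR : PathContains G Q R) : PathContains G P R :=
  ⟨hQR.1.trans hPQ.1, hQR.2.trans hPQ.2⟩

lemma pathContains_reverse (P : InducedPath G) : PathContains G P P.reverse := by
  simp [PathContains]

variable [DecidableEq V]

lemma pathContains_takeUntil (P : InducedPath G) {u : V} (h : u ∈ P.walk.support) :
    PathContains G P (P.takeUntil h) :=
  ⟨P.walk.support_takeUntil_subset_support h, P.walk.edges_takeUntil_subset_edges h⟩

lemma pathContains_dropUntil (P : InducedPath G) {u : V} (h : u ∈ P.walk.support) :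
    PathContains G P (P.dropUntil h) :=
  ⟨P.walk.support_dropUntil_subset_support h, P.walk.edges_dropUntil_subset_edges h⟩

end PathContains

namespace InducedPath

variable {V : Type*} {G : SimpleGraph V}

lemma exists_pathContains_first_last (P : InducedPath G) {x y : V} (hx : x ∈ P.vertexSet)
    (hy : y ∈ P.vertexSet) : ∃ S, PathContains G P S ∧ S.first = x ∧ S.last = y := by
  classical
  by_cases hy' : y ∈ (P.walk.dropUntil x hx).support
  · exact ⟨(P.dropUntil hx).takeUntil hy',
      (pathContains_dropUntil P hx).trans (pathContains_takeUntil _ hy'), rfl, rfl⟩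
  · have hy'' : y ∈ (P.walk.takeUntil x hx).support := by
      have hy : y ∈ P.walk.support := hy
      rw [← P.walk.take_spec hx, Walk.mem_support_append_iff] at hy
      exact hy.resolve_right hy'
    exact ⟨((P.takeUntil hx).dropUntil hy'').reverse, (pathContains_takeUntil P hx).trans
      ((pathContains_dropUntil _ hy'').trans (pathContains_reverse _)), rfl, rfl⟩

lemma exists_takeUntil_inter_vertexSet_eq_singleton [DecidableEq V] (P Q : InducedPath G)
    {e : Sym2 V} (hP : e ∈ P.edgeSet) (hQ : e ∈ Q.edgeSet) :
    ∃ u, ∃ h : u ∈ P.walk.support,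
      (P.takeUntil h).vertexSet ∩ Q.vertexSet = {u} ∧ e ∈ (P.dropUntil h).edgeSet := by
  obtain ⟨a, haP, haQ⟩ := (nontrivial_inter_vertexSet_of_mem_edgeSet hP hQ).nonempty
  obtain ⟨u, huQ, huP, hfirst⟩ := P.walk.exists_mem_support_forall_mem_support_imp_eq
    Q.walk.support.toFinset ⟨a, Finset.mem_filter.mpr ⟨List.mem_toFinset.mpr haQ, haP⟩⟩
  have hinter : (P.takeUntil huP).vertexSet ∩ Q.vertexSet = {u} := by
    ext y
    refine ⟨fun hy => hfirst y (List.mem_toFinset.mpr hy.2) hy.1, ?_⟩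
    rintro rfl
    exact ⟨(P.walk.takeUntil y huP).end_mem_support, List.mem_toFinset.mp huQ⟩
  refine ⟨u, huP, hinter, ?_⟩
  have he : e ∈ (P.walk.takeUntil u huP).edges ++ (P.walk.dropUntil u huP).edges := by
    rw [← Walk.edges_append, P.walk.take_spec huP]
    exact hP
  refine (List.mem_append.mp he).resolve_left fun he' => ?_
  exact Set.not_nontrivial_singleton (hinter ▸ nontrivial_inter_vertexSet_of_mem_edgeSet he' hQ)

end InducedPath

namespace IsBlockGraph

variable {V : Type*} [Finite V] {G : SimpleGraph V}

theorem adj_of_subgraphBiconnected (hG : IsBlockGraph G) {H : G.Subgraph}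
    (hH : SubgraphBiconnected H) {a b : V} (ha : a ∈ H.verts) (hb : b ∈ H.verts)
    (hab : a ≠ b) : G.Adj a b := by
  obtain ⟨M, hHM, hM⟩ :=
    (Set.toFinite {H' : G.Subgraph | SubgraphBiconnected H'}).exists_le_maximal hH
  exact M.adj_sub <| hG M ⟨hM.prop, fun H' hH' hMH' => (hM.eq_of_le hH' hMH').symm⟩
    a (hHM.1 ha) b (hHM.1 hb) hab

theorem snd_eq_of_isChordless (hG : IsBlockGraph G) {x z : V} (hxz : x ≠ z)
    {p q : G.Walk x z} (hp : p.IsPath) (hq : q.IsPath) (hpc : p.IsChordless)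
    (hqc : q.IsChordless) : p.snd = q.snd := by
  classical
  obtain ⟨u, hu, hup, hfirst⟩ := p.exists_mem_support_forall_mem_support_imp_eq
    (q.support.toFinset.erase x) ⟨z, by simp [hxz.symm]⟩
  rw [Finset.mem_erase, List.mem_toFinset] at hu
  have hxu : G.Adj x u := by
    refine hG.adj_of_subgraphBiconnected (subgraphBiconnected_toSubgraph_sup (hp.takeUntil hup)
        (hq.takeUntil hu.2) hu.1.symm fun y hyp hyq => ?_)
      (Or.inl (Walk.start_mem_verts_toSubgraph _)) (Or.inl (Walk.end_mem_verts_toSubgraph _))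
      hu.1.symm
    refine or_iff_not_imp_left.mpr fun hyx => hfirst y ?_ hyp
    simpa [hyx] using q.support_takeUntil_subset_support hu.2 hyq
  rw [← hp.eq_snd_of_mem_edges (hpc.mem_edges p.start_mem_support hup hxu),
    ← hq.eq_snd_of_mem_edges (hqc.mem_edges q.start_mem_support hu.2 hxu)]

theorem eq_of_isChordless (hG : IsBlockGraph G) {x z : V} {p q : G.Walk x z} (hp : p.IsPath)
    (hq : q.IsPath) (hpc : p.IsChordless) (hqc : q.IsChordless) : p = q := by
  induction p with
  | nil => exact (Walk.eq_nil_iff_nil.mpr (Walk.isPath_iff_nil.mp hq)).symm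
  | @cons x y z h p ih =>
    cases q with
    | nil => exact absurd (Walk.isPath_iff_nil.mp hp) Walk.not_nil_cons
    | cons h' q =>
      have hxz : x ≠ z := by
        rintro rfl
        exact ((Walk.cons_isPath_iff h p).mp hp).2 p.end_mem_support
      obtain rfl : y = _ := by simpa using hG.snd_eq_of_isChordless hxz hp hq hpc hqc
      rw [ih hp.of_cons hq.of_cons (hpc.of_cons hp) (hqc.of_cons hq)]

theorem inducedPath_eq (hG : IsBlockGraph G) {P Q : InducedPath G} (hf : P.first = Q.first)
    (hl : P.last = Q.last) : P = Q := by
  obtain ⟨x, z, p, hp, hpi⟩ := P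
  obtain ⟨x', z', q, hq, hqi⟩ := Q
  dsimp only at hf hl
  subst hf hl
  obtain rfl := hG.eq_of_isChordless hp hq (InducedPath.isChordless ⟨x, z, p, hp, hpi⟩)
    (InducedPath.isChordless ⟨x, z, q, hq, hqi⟩)
  rfl

theorem pathContains_of_first_mem_of_last_mem (hG : IsBlockGraph G) {Q R : InducedPath G}
    (hf : R.first ∈ Q.vertexSet) (hl : R.last ∈ Q.vertexSet) : PathContains G Q R := by
  obtain ⟨S, hQS, hSf, hSl⟩ := Q.exists_pathContains_first_last hf hl
  rwa [hG.inducedPath_eq hSf hSl] at hQS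

theorem exists_shorter_pathContains_meeting_interior (hG : IsBlockGraph G)
    {Q R : InducedPath G} (hQR : ¬ PathContains G Q R) {e : Sym2 V} (hQ : e ∈ Q.edgeSet)
    (hR : e ∈ R.edgeSet) :
    ∃ Q', PathContains G Q Q' ∧ Q'.walk.length < Q.walk.length ∧
      (Q'.first = Q.first ∧ Q'.last ∈ R.interior ∧
          Q'.vertexSet ∩ R.vertexSet = {Q'.last} ∨
        Q'.last = Q.last ∧ Q'.first ∈ R.interior ∧
          Q'.vertexSet ∩ R.vertexSet = {Q'.first}) := by
  classical
  obtain ⟨u, hu, huR, heu⟩ := Q.exists_takeUntil_inter_vertexSet_eq_singleton R hQ hR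
  by_cases hu' : u ∈ R.interior
  · exact ⟨Q.takeUntil hu, pathContains_takeUntil Q hu,
      Q.walk.length_takeUntil_lt_length_of_mem_edges_dropUntil hu heu, Or.inl ⟨rfl, hu', huR⟩⟩
  set Q₁ := (Q.dropUntil hu).reverse
  have hQQ₁ : PathContains G Q Q₁ :=
    (pathContains_dropUntil Q hu).trans (pathContains_reverse _)
  obtain ⟨v, hv, hvR, hev⟩ :=
    Q₁.exists_takeUntil_inter_vertexSet_eq_singleton R (by simpa [Q₁] using heu) hR
  by_cases hv' : v ∈ R.interior
  · have hlen := Q₁.walk.length_takeUntil_lt_length_of_mem_edges_dropUntil hv hev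
    refine ⟨(Q₁.takeUntil hv).reverse,
      hQQ₁.trans ((pathContains_takeUntil Q₁ hv).trans (pathContains_reverse _)), ?_,
      Or.inr ⟨rfl, hv', by rw [InducedPath.reverse_vertexSet]; exact hvR⟩⟩
    rw [InducedPath.reverse_length]
    exact hlen.trans_le ((InducedPath.reverse_length _).trans_le
      (Q.walk.length_dropUntil_le_length hu))
  -- Otherwise `Q` passes through both ends of `R`.
  refine absurd ?_ hQR
  have huv : u ≠ v := by
    rintro rfl
    exact List.ne_nil_of_mem hev
      (Walk.edges_eq_nil.mpr (Walk.isPath_iff_nil.mp (Q₁.isPath.dropUntil hv)))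
  have hub : u = R.first ∨ u = R.last := by_contra fun h => hu' ⟨(huR.symm.subset rfl).2, h⟩
  have hvb : v = R.first ∨ v = R.last := by_contra fun h => hv' ⟨(hvR.symm.subset rfl).2, h⟩
  have huQ : u ∈ Q.vertexSet := hu
  have hvQ : v ∈ Q.vertexSet := hQQ₁.1 hv
  apply hG.pathContains_of_first_mem_of_last_mem <;>
    rcases hub with rfl | rfl <;> rcases hvb with h | h <;> simp_all

end IsBlockGraph

lemma Set.inter_eq_singleton_of_subset {α : Type*} {A B C : Set α} {a : α} (hAB : A ⊆ B)
    (h : B ∩ C = {a}) (ha : a ∈ A) : A ∩ C = {a} :=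
  (h ▸ Set.inter_subset_inter_left C hAB).antisymm
    (Set.singleton_subset_iff.mpr ⟨ha, (h.symm.subset rfl).2⟩)

section Forbidden

variable {V : Type*} {G : SimpleGraph V} {ℓ : ℕ} {P : Fin ℓ → InducedPath G}

lemma PairwiseVertexDisjoint.disjoint_insert_famEdges (hdisj : PairwiseVertexDisjoint G P)
    {E : Set (Sym2 V)} {x y : V} {j : Fin ℓ} (hy : y ∈ (P j).vertexSet)
    (hx : x ∉ (P j).vertexSet) (hE : Disjoint E (famEdges G P)) :
    Disjoint (insert s(x, y) E) (famEdges G P) := by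
  refine Set.disjoint_insert_left.mpr ⟨fun hxy => ?_, hE⟩
  obtain ⟨m, hm⟩ := Set.mem_iUnion.mp hxy
  obtain rfl : m = j := by
    by_contra hmj
    exact Set.disjoint_left.mp (hdisj m j hmj) ((P m).walk.snd_mem_support_of_mem_edges hm) hy
  exact hx ((P m).walk.fst_mem_support_of_mem_edges hm)

lemma ne_of_subsingleton_inter_vertexSet {Q : InducedPath G} {e : Sym2 V} {i k : Fin ℓ}
    (hQi : (Q.vertexSet ∩ (P i).vertexSet).Subsingleton) (hQ : e ∈ Q.edgeSet)
    (hk : e ∈ (P k).edgeSet) : k ≠ i := by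
  rintro rfl
  exact (InducedPath.nontrivial_inter_vertexSet_of_mem_edgeSet hQ hk).not_subsingleton hQi

theorem HasForbiddenEdgeDisjoint.hasForbidden (h : HasForbiddenEdgeDisjoint G P) :
    HasForbidden G P := by
  rcases h with ⟨i, j, Q, hQ, -⟩ | ⟨i, j, Q, b, c, hQ, -⟩ |
    ⟨i, j, Q, a, b, c, d, hQ, -⟩ | hL
  · exact Or.inl ⟨i, j, Q, hQ⟩
  · exact Or.inr (Or.inl ⟨i, j, Q, b, c, hQ⟩)
  · exact Or.inr (Or.inr (Or.inl ⟨i, j, Q, a, b, c, d, hQ⟩))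
  · exact Or.inr (Or.inr (Or.inr hL))

variable [Finite V]

theorem IsInternalStrand.hasForbiddenEdgeDisjoint (hG : IsBlockGraph G) {i j : Fin ℓ}
    {Q : InducedPath G} (hQ : IsInternalStrand G P i j Q) : HasForbiddenEdgeDisjoint G P := by
  induction hn : Q.walk.length using Nat.strong_induction_on generalizing i j Q with
  | _ n ih =>
  by_cases hQP : Disjoint Q.edgeSet (famEdges G P)
  · exact Or.inl ⟨i, j, Q, hQ, hQP⟩
  obtain ⟨e, hQe, hPe⟩ := Set.not_disjoint_iff.mp hQP
  obtain ⟨k, hke⟩ := Set.mem_iUnion.mp hPe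
  obtain ⟨hij, hind, hfi, hlj, hQi, hQj, hnc⟩ := hQ
  have hki := ne_of_subsingleton_inter_vertexSet (hQi ▸ Set.subsingleton_singleton) hQe hke
  have hkj := ne_of_subsingleton_inter_vertexSet (hQj ▸ Set.subsingleton_singleton) hQe hke
  obtain ⟨Q', hQQ', hlt, ⟨hf, hl, hQ'k⟩ | ⟨hl, hf, hQ'k⟩⟩ :=
    hG.exists_shorter_pathContains_meeting_interior (hnc k) hQe hke
  · refine ih _ (hn ▸ hlt) ⟨hki.symm, hQQ'.1.trans hind, hf ▸ hfi, hl, ?_, hQ'k,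
      fun m h => hnc m (hQQ'.trans h)⟩ rfl
    rw [hf]
    exact Set.inter_eq_singleton_of_subset hQQ'.1 hQi (hf ▸ Q'.first_mem_vertexSet)
  · refine ih _ (hn ▸ hlt) ⟨hkj, hQQ'.1.trans hind, hf, hl ▸ hlj, hQ'k, ?_,
      fun m h => hnc m (hQQ'.trans h)⟩ rfl
    rw [hl]
    exact Set.inter_eq_singleton_of_subset hQQ'.1 hQj (hl ▸ Q'.last_mem_vertexSet)

theorem IsInternalFork.hasForbiddenEdgeDisjoint (hG : IsBlockGraph G)
    (hdisj : PairwiseVertexDisjoint G P) {i j : Fin ℓ} {Q : InducedPath G} {b c : V}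
    (hQ : IsInternalFork G P i j Q b c) : HasForbiddenEdgeDisjoint G P := by
  induction hn : Q.walk.length using Nat.strong_induction_on generalizing i Q with
  | _ n ih =>
  obtain ⟨hij, hind, hfi, hQi, hQj, hb, hc, hbc, hlb, hlc, hnc⟩ := hQ
  by_cases hQP : Disjoint Q.edgeSet (famEdges G P)
  · have hl : Q.last ∉ (P j).vertexSet := fun h => hQj.subset ⟨Q.last_mem_vertexSet, h⟩
    refine Or.inr (Or.inl ⟨i, j, Q, b, c,
      ⟨hij, hind, hfi, hQi, hQj, hb, hc, hbc, hlb, hlc, hnc⟩, ?_⟩)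
    rw [Set.union_insert, Set.union_singleton]
    exact PairwiseVertexDisjoint.disjoint_insert_famEdges hdisj hb hl
      (PairwiseVertexDisjoint.disjoint_insert_famEdges hdisj hc hl hQP)
  obtain ⟨e, hQe, hPe⟩ := Set.not_disjoint_iff.mp hQP
  obtain ⟨k, hke⟩ := Set.mem_iUnion.mp hPe
  have hki := ne_of_subsingleton_inter_vertexSet (hQi ▸ Set.subsingleton_singleton) hQe hke
  have hkj := ne_of_subsingleton_inter_vertexSet (hQj ▸ Set.subsingleton_empty) hQe hke
  obtain ⟨Q', hQQ', hlt, ⟨hf, hl, hQ'k⟩ | ⟨hl, hf, hQ'k⟩⟩ :=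
    hG.exists_shorter_pathContains_meeting_interior (hnc k) hQe hke
  · refine IsInternalStrand.hasForbiddenEdgeDisjoint hG (i := i) (j := k)
      ⟨hki.symm, hQQ'.1.trans hind, hf ▸ hfi, hl, ?_, hQ'k, fun m h => hnc m (hQQ'.trans h)⟩
    rw [hf]
    exact Set.inter_eq_singleton_of_subset hQQ'.1 hQi (hf ▸ Q'.first_mem_vertexSet)
  · exact ih _ (hn ▸ hlt) ⟨hkj, hQQ'.1.trans hind, hf, hQ'k,
      Set.subset_eq_empty (Set.inter_subset_inter_left _ hQQ'.1) hQj, hb, hc, hbc, hl ▸ hlb,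
      hl ▸ hlc, fun m h => hnc m (hQQ'.trans h)⟩ rfl

theorem IsDoubleFork.hasForbiddenEdgeDisjoint (hG : IsBlockGraph G)
    (hdisj : PairwiseVertexDisjoint G P) {i j : Fin ℓ} {Q : InducedPath G} {a b c d : V}
    (hQ : IsDoubleFork G P i j Q a b c d) : HasForbiddenEdgeDisjoint G P := by
  obtain ⟨hij, hind, hQi, hQj, ha, hb, hab, hc, hd, hcd, hfa, hfb, hlc, hld, hnc⟩ := hQ
  by_cases hQP : Disjoint Q.edgeSet (famEdges G P)
  · have hf : Q.first ∉ (P i).vertexSet := fun h => hQi.subset ⟨Q.first_mem_vertexSet, h⟩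
    have hl : Q.last ∉ (P j).vertexSet := fun h => hQj.subset ⟨Q.last_mem_vertexSet, h⟩
    refine Or.inr (Or.inr (Or.inl ⟨i, j, Q, a, b, c, d,
      ⟨hij, hind, hQi, hQj, ha, hb, hab, hc, hd, hcd, hfa, hfb, hlc, hld, hnc⟩, ?_⟩))
    rw [Set.union_insert, Set.union_insert, Set.union_insert, Set.union_singleton]
    exact PairwiseVertexDisjoint.disjoint_insert_famEdges hdisj ha hf <|
      PairwiseVertexDisjoint.disjoint_insert_famEdges hdisj hb hf <|
      PairwiseVertexDisjoint.disjoint_insert_famEdges hdisj hc hl <|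
      PairwiseVertexDisjoint.disjoint_insert_famEdges hdisj hd hl hQP
  obtain ⟨e, hQe, hPe⟩ := Set.not_disjoint_iff.mp hQP
  obtain ⟨k, hke⟩ := Set.mem_iUnion.mp hPe
  have hki := ne_of_subsingleton_inter_vertexSet (hQi ▸ Set.subsingleton_empty) hQe hke
  have hkj := ne_of_subsingleton_inter_vertexSet (hQj ▸ Set.subsingleton_empty) hQe hke
  obtain ⟨Q', hQQ', -, ⟨hf, hl, hQ'k⟩ | ⟨hl, hf, hQ'k⟩⟩ :=
    hG.exists_shorter_pathContains_meeting_interior (hnc k) hQe hke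
  · have hQQ'' := hQQ'.trans (pathContains_reverse Q')
    exact IsInternalFork.hasForbiddenEdgeDisjoint hG hdisj (i := k) (j := i) (Q := Q'.reverse)
      ⟨hki, hQQ''.1.trans hind, hl, by simpa using hQ'k,
        Set.subset_eq_empty (Set.inter_subset_inter_left _ hQQ''.1) hQi, ha, hb, hab,
        (hf ▸ hfa : G.Adj Q'.first a), (hf ▸ hfb : G.Adj Q'.first b),
        fun m h => hnc m (hQQ''.trans h)⟩
  · exact IsInternalFork.hasForbiddenEdgeDisjoint hG hdisj (i := k) (j := j)
      ⟨hkj, hQQ'.1.trans hind, hf, hQ'k,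
        Set.subset_eq_empty (Set.inter_subset_inter_left _ hQQ'.1) hQj, hc, hd, hcd,
        hl ▸ hlc, hl ▸ hld, fun m h => hnc m (hQQ'.trans h)⟩

theorem HasForbidden.hasForbiddenEdgeDisjoint (hG : IsBlockGraph G)
    (hdisj : PairwiseVertexDisjoint G P) (h : HasForbidden G P) :
    HasForbiddenEdgeDisjoint G P := by
  obtain ⟨_, _, _, hQ⟩ | ⟨_, _, _, _, _, hQ⟩ | ⟨_, _, _, _, _, _, _, hQ⟩ | hL := h
  · exact IsInternalStrand.hasForbiddenEdgeDisjoint hG hQ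
  · exact IsInternalFork.hasForbiddenEdgeDisjoint hG hdisj hQ
  · exact IsDoubleFork.hasForbiddenEdgeDisjoint hG hdisj hQ
  · exact Or.inr (Or.inr (Or.inr hL))

end Forbidden

theorem blockGraph_no_forbidden_iff_no_edgeDisjoint_forbidden_general {V : Type*} [Fintype V]
    (G : SimpleGraph V) (hBG : IsBlockGraph G) (ℓ : ℕ)
    (P : Fin ℓ → InducedPath G) (hdisj : PairwiseVertexDisjoint G P) :
    ¬ HasForbidden G P ↔ ¬ HasForbiddenEdgeDisjoint G P :=
  ⟨mt HasForbiddenEdgeDisjoint.hasForbidden,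
    mt (HasForbidden.hasForbiddenEdgeDisjoint hBG hdisj)⟩

/-- **Theorem (Statement 15).** For vertex-disjoint induced paths of a finite simple
block graph, `P_ind` contains no internal strand, internal fork, double fork, or
complete ladder if and only if it contains no complete ladder, nor an internal
strand, internal fork, or double fork which is edge-disjoint from the family. -/
theorem blockGraph_no_forbidden_iff_no_edgeDisjoint_forbidden {V : Type*} [Fintype V]
    [DecidableEq V] (G : SimpleGraph V) (hBG : IsBlockGraph G) (ℓ : ℕ)
    (P : Fin ℓ → InducedPath G) (hdisj : PairwiseVertexDisjoint G P) :
    ¬ HasForbidden G P ↔ ¬ HasForbiddenEdgeDisjoint G P :=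
  blockGraph_no_forbidden_iff_no_edgeDisjoint_forbidden_general G hBG ℓ P hdisj
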